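/- The cycle C_5 on 5 vertices satisfies γ_r(C_5) = 3; consequently 10·γ_r(C_5) = 5·n_2(C_5) + 4·n_3(C_5) + 5, so the additive constant 5 in the bound 10·γ_r(G) ≤ 5·n_2(G) + 4·n_3(G) + 5 for connected graphs with all degrees 2 or 3 cannot be decreased. -/

import Mathlib

/-- `S` is a restrained dominating set of `G`: every vertex not in `S` has a
neighbor in `S` (domination) and also a neighbor not in `S` (restraint). -/
def IsRestrainedDomSet {V : Type*} (G : SimpleGraph V) (S : Set V) : Prop :=
  (∀ v ∉ S, ∃ u ∈ S, G.Adj v u) ∧ (∀ v ∉ S, ∃ u ∉ S, G.Adj v u)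

/-- The restrained domination number of a finite graph: the minimum cardinality
of a restrained dominating set. -/
noncomputable def restrainedDominationNumber {V : Type*} [Fintype V] (G : SimpleGraph V) : ℕ :=
  sInf {n : ℕ | ∃ S : Set V, IsRestrainedDomSet G S ∧ S.ncard = n}

namespace SimpleGraph

variable {V : Type*} (G : SimpleGraph V)

theorem ncard_neighborSet_eq_degree (v : V) [Fintype (G.neighborSet v)] :
    (G.neighborSet v).ncard = G.degree v := by
  rw [← Nat.card_coe_set_eq, Nat.card_eq_fintype_card, card_neighborSet_eq_degree]

theorem isRestrainedDomSet_univ : IsRestrainedDomSet G Set.univ :=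
  ⟨fun v hv => absurd (Set.mem_univ v) hv, fun v hv => absurd (Set.mem_univ v) hv⟩

variable [Fintype V] {G}

theorem restrainedDominationNumber_le_ncard {S : Set V} (hS : IsRestrainedDomSet G S) :
    restrainedDominationNumber G ≤ S.ncard :=
  Nat.sInf_le ⟨S, hS, rfl⟩

theorem le_restrainedDominationNumber {n : ℕ}
    (h : ∀ S : Set V, IsRestrainedDomSet G S → n ≤ S.ncard) :
    n ≤ restrainedDominationNumber G :=
  le_csInf ⟨_, _, G.isRestrainedDomSet_univ, rfl⟩ fun _ ⟨S, hS, hn⟩ => hn ▸ h S hS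

end SimpleGraph

open SimpleGraph

theorem isRestrainedDomSet_cycleGraph_five :
    IsRestrainedDomSet (cycleGraph 5) ({0, 1, 2} : Finset (Fin 5)) := by
  simp only [IsRestrainedDomSet, Finset.mem_coe]
  decide

/- By hand: a set of at most two vertices either lies in some `{i, i + 1}`, leaving `i + 3`
undominated, or is `{i, i + 2}`, leaving `i + 1` with no neighbour outside it. -/
theorem three_le_card_of_isRestrainedDomSet_cycleGraph_five (S : Finset (Fin 5))
    (hS : IsRestrainedDomSet (cycleGraph 5) S) : 3 ≤ S.card := by
  simp only [IsRestrainedDomSet, Finset.mem_coe] at hS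
  revert S
  decide

theorem restrainedDominationNumber_cycleGraph_five_eq_three :
    restrainedDominationNumber (cycleGraph 5) = 3 := by
  classical
  refine le_antisymm ?_ (le_restrainedDominationNumber fun S hS => ?_)
  · simpa using restrainedDominationNumber_le_ncard isRestrainedDomSet_cycleGraph_five
  · rw [← S.coe_toFinset, Set.ncard_coe_finset]
    exact three_le_card_of_isRestrainedDomSet_cycleGraph_five _ (by rwa [S.coe_toFinset])

theorem ncard_neighborSet_cycleGraph_five (v : Fin 5) :
    ((cycleGraph 5).neighborSet v).ncard = 2 := by
  rw [ncard_neighborSet_eq_degree, cycleGraph_degree_three_le]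

/-- The cycle `C₅` satisfies `γ_r(C₅) = 3`, and consequently
`10·γ_r(C₅) = 5·n₂(C₅) + 4·n₃(C₅) + 5`, so the additive constant `5` in the
bound for connected graphs with all degrees `2` or `3` cannot be decreased. -/
theorem restrainedDominationNumber_cycleGraph_five :
    restrainedDominationNumber (SimpleGraph.cycleGraph 5) = 3 ∧
    10 * restrainedDominationNumber (SimpleGraph.cycleGraph 5) =
      5 * {v : Fin 5 | ((SimpleGraph.cycleGraph 5).neighborSet v).ncard = 2}.ncard
        + 4 * {v : Fin 5 | ((SimpleGraph.cycleGraph 5).neighborSet v).ncard = 3}.ncard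
        + 5 := by
  simp only [ncard_neighborSet_cycleGraph_five, restrainedDominationNumber_cycleGraph_five_eq_three]
  simp
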